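/- With the notation of the PGM analysis (full-rank G ∈ F_q^{k×n}, code C, f : F_q^n → ℂ with ‖f‖₂ = 1, W_s = ∑_{y ∈ C_s^⊥} f̂(y) e_y, n_s = ‖W_s‖, and for n_s > 0 the normalized vectors W̃_s = W_s/n_s), define Y_c = q^{-k/2} ∑_{s ∈ F_q^k} χ_c(u_s) W̃_s for c ∈ C. Assuming all n_s > 0, the vectors {Y_c}_{c ∈ C} are pairwise orthonormal, and for every c ∈ C the overlap satisfies ⟨Y_c, ψ̂_c⟩ = q^{-k/2} ∑_{s ∈ F_q^k} n_s, hence |⟨Y_c, ψ̂_c⟩|² = (1/q^k)(∑_s n_s)². -/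

import Mathlib

open scoped BigOperators
open Finset

/-- The additive character `χ_y(x) = exp(2πi·Tr(x·y)/p)` of a finite field `F` of
characteristic `p`, where `Tr` is the (absolute) trace from `F` down to `F_p = ZMod p`. -/
noncomputable def chi1 (F : Type) [Field F] [Fintype F]
    [Algebra (ZMod (ringChar F)) F] (y x : F) : ℂ :=
  Complex.exp (2 * Real.pi * Complex.I *
    ((Algebra.trace (ZMod (ringChar F)) F (x * y)).val : ℂ) / (ringChar F : ℂ))

/-- The character of `F_q^n`, extended multiplicatively: `χ_y(x) = ∏ i, χ_{y i}(x i)`. -/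
noncomputable def chi (F : Type) [Field F] [Fintype F]
    [Algebra (ZMod (ringChar F)) F] (n : ℕ) (y x : Fin n → F) : ℂ :=
  ∏ i, chi1 F (y i) (x i)

/-- The Fourier transform on `F_q^n`: `f̂(x) = q^{-n/2} ∑_y χ_x(y) f(y)`. -/
noncomputable def FT (F : Type) [Field F] [Fintype F]
    [Algebra (ZMod (ringChar F)) F] (n : ℕ) (f : (Fin n → F) → ℂ) :
    (Fin n → F) → ℂ :=
  fun x => (Real.sqrt ((Fintype.card F : ℝ) ^ n) : ℂ)⁻¹ * ∑ y : Fin n → F, chi F n x y * f y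

/-! Since `W_s` is supported on the fiber `{y | G y = s}`, the `W_s` are orthogonal with
`‖W_s‖ = n_s`, so the inner product of `∑_s a_s W_s / n_s` and `∑_s b_s W_s / n_s` is
`∑_s conj(a_s) b_s`. For a codeword `c = m G` one has `χ_c(u_s) = ψ(m ⬝ s)` with `ψ` the
primitive trace character, so `⟨Y_c, Y_c'⟩ = q^{-k} ∑_s ψ((m' - m) ⬝ s)` for `c ≠ c'`, and this
character sum over `F_q^k` vanishes. Translating `f` by `c` multiplies `f̂(y)` by
`χ_c(y) = χ_c(u_{G y})`, which cancels the phase of `Y_c` and leaves `q^{-k/2} ∑_s n_s`. -/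

open Matrix ComplexConjugate

namespace AddChar

variable {A M : Type*}

theorem map_sum_eq_prod [AddCommMonoid A] [CommMonoid M] (ψ : AddChar A M) {ι : Type*}
    (s : Finset ι) (g : ι → A) : ψ (∑ i ∈ s, g i) = ∏ i ∈ s, ψ (g i) :=
  map_prod ψ.toMonoidHom (fun i => Multiplicative.ofAdd (g i)) s

theorem conj_apply_mul_apply [AddCommGroup A] [Finite A] (ψ : AddChar A ℂ) (a b : A) :
    conj (ψ a) * ψ b = ψ (b - a) := by
  rw [← map_neg_eq_conj, ← map_add_eq_mul, neg_add_eq_sub]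

theorem sum_apply_dotProduct {R R' ι : Type*} [CommRing R] [Fintype R] [CommRing R'] [IsDomain R']
    [Fintype ι] [DecidableEq ι] [DecidableEq (ι → R)] {ψ : AddChar R R'} (hψ : ψ.IsPrimitive)
    (d : ι → R) :
    ∑ s : ι → R, ψ (d ⬝ᵥ s) = if d = 0 then (Fintype.card R : R') ^ Fintype.card ι else 0 := by
  split_ifs with hd
  · simp [hd]
  · obtain ⟨i, hi⟩ := Function.ne_iff.mp hd
    obtain ⟨t, ht⟩ := ne_one_iff.mp (hψ hi)
    let φ : AddChar (ι → R) R' :=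
      ψ.compAddMonoidHom (AddMonoidHom.mk' (d ⬝ᵥ ·) (dotProduct_add d))
    refine sum_eq_zero_of_ne_one (ψ := φ) (ne_one_iff.mpr ⟨Pi.single i t, ?_⟩)
    simpa [φ, dotProduct_single] using ht

end AddChar

section TraceCharacter

variable (F : Type) [Field F] [Fintype F] [Algebra (ZMod (ringChar F)) F]

instance : NeZero (ringChar F) := ⟨CharP.char_ne_zero_of_finite F _⟩

noncomputable def traceChar : AddChar F ℂ :=
  ZMod.stdAddChar.compAddMonoidHom (Algebra.trace (ZMod (ringChar F)) F).toAddMonoidHom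

theorem traceChar_isPrimitive : (traceChar F).IsPrimitive := by
  intro a ha
  obtain ⟨b, hb⟩ := FiniteField.trace_to_zmod_nondegenerate F ha
  refine AddChar.ne_one_iff.mpr ⟨b, fun h => hb ?_⟩
  simp only [AddChar.mulShift_apply, traceChar, AddChar.compAddMonoidHom_apply,
    LinearMap.toAddMonoidHom_coe] at h
  exact ZMod.injective_stdAddChar (h.trans (AddChar.map_zero_eq_one _).symm)

theorem chi1_eq_traceChar (y x : F) : chi1 F y x = traceChar F (x * y) := by
  simp only [chi1, traceChar, AddChar.compAddMonoidHom_apply, LinearMap.toAddMonoidHom_coe,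
    ZMod.stdAddChar_apply, ZMod.toCircle_apply]

variable {F} {n : ℕ}

theorem chi_eq_traceChar (y x : Fin n → F) : chi F n y x = traceChar F (x ⬝ᵥ y) := by
  rw [chi, dotProduct, AddChar.map_sum_eq_prod]
  exact prod_congr rfl fun i _ => chi1_eq_traceChar F (y i) (x i)

theorem conj_chi_mul_self (y x : Fin n → F) : conj (chi F n y x) * chi F n y x = 1 := by
  rw [chi_eq_traceChar, AddChar.conj_apply_mul_apply, sub_self, AddChar.map_zero_eq_one]

theorem chi_comm (y x : Fin n → F) : chi F n y x = chi F n x y := by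
  rw [chi_eq_traceChar, chi_eq_traceChar, dotProduct_comm]

theorem chi_vecMul {k : ℕ} (m : Fin k → F) (G : Matrix (Fin k) (Fin n) F) (x : Fin n → F) :
    chi F n (vecMul m G) x = traceChar F (m ⬝ᵥ G *ᵥ x) := by
  rw [chi_comm, chi_eq_traceChar, dotProduct_mulVec]

theorem FT_comp_sub_apply (f : (Fin n → F) → ℂ) (c y : Fin n → F) :
    FT F n (fun e => f (e - c)) y = chi F n c y * FT F n f y := by
  have hchi_add : ∀ z, chi F n y (z + c) = chi F n y z * chi F n c y := fun z => by
    rw [chi_comm c, chi_eq_traceChar, chi_eq_traceChar, chi_eq_traceChar, add_dotProduct,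
      AddChar.map_add_eq_mul]
  rw [FT, FT, ← Equiv.sum_comp (Equiv.addRight c)]
  simp only [Equiv.coe_addRight, add_sub_cancel_right, hchi_add, mul_sum]
  exact sum_congr rfl fun z _ => by ring

end TraceCharacter

theorem sum_conj_chi_mul_chi_codeword {F : Type} [Field F] [Fintype F] [DecidableEq F]
    [Algebra (ZMod (ringChar F)) F] {n k : ℕ} (G : Matrix (Fin k) (Fin n) F)
    (u : (Fin k → F) → (Fin n → F)) (hu : ∀ s, G *ᵥ u s = s) (m m' : Fin k → F) :
    ∑ s, conj (chi F n (vecMul m G) (u s)) * chi F n (vecMul m' G) (u s) =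
      if vecMul m G = vecMul m' G then (Fintype.card F : ℂ) ^ k else 0 := by
  split_ifs with hc
  · simp [hc, conj_chi_mul_self]
  · simp only [chi_vecMul, hu, AddChar.conj_apply_mul_apply, ← sub_dotProduct]
    rw [AddChar.sum_apply_dotProduct (traceChar_isPrimitive F), if_neg]
    exact fun h => hc (by rw [sub_eq_zero.mp h])

theorem sum_conj_mul_eq_sum_mul_fiberNorm_sq {α β : Type*} [Fintype α] [Fintype β]
    [DecidableEq β] (π : α → β) (W : α → ℂ) (ns : β → ℝ)
    (hns : ∀ s, ns s = √(∑ y, if π y = s then ‖W y‖ ^ 2 else 0)) (a b : β → ℂ) :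
    ∑ y, conj (a (π y) * W y) * (b (π y) * W y) = ∑ s, conj (a s) * b s * (ns s : ℂ) ^ 2 := by
  have hfiber : ∀ s, (ns s : ℂ) ^ 2 = ∑ y with π y = s, conj (W y) * W y := fun s => by
    rw [← Complex.ofReal_pow, hns, Real.sq_sqrt (sum_nonneg fun y _ => by positivity),
      ← sum_filter]
    push_cast
    simp only [Complex.conj_mul']
  rw [← sum_fiberwise univ π]
  refine sum_congr rfl fun s _ => ?_
  rw [hfiber, mul_sum]
  refine sum_congr rfl fun y hy => ?_
  rw [(mem_filter.mp hy).2, map_mul]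
  ring

theorem inv_ofReal_sqrt_mul_self {r : ℝ} (hr : 0 ≤ r) :
    ((√r : ℝ) : ℂ)⁻¹ * ((√r : ℝ) : ℂ)⁻¹ = (r : ℂ)⁻¹ := by
  rw [← mul_inv, ← Complex.ofReal_mul, Real.mul_self_sqrt hr]

theorem norm_inv_ofReal_sqrt_mul_sq {r : ℝ} (hr : 0 ≤ r) (x : ℝ) :
    ‖((√r : ℝ) : ℂ)⁻¹ * x‖ ^ 2 = 1 / r * x ^ 2 := by
  rw [norm_mul, mul_pow, ← norm_pow, sq, inv_ofReal_sqrt_mul_self hr, norm_inv,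
    Complex.norm_real, Complex.norm_real, Real.norm_of_nonneg hr, Real.norm_eq_abs, sq_abs,
    one_div]

section PrettyGoodMeasurement

variable {F : Type} [Field F] [Fintype F] [DecidableEq F] [Algebra (ZMod (ringChar F)) F]
  {n k : ℕ} (G : Matrix (Fin k) (Fin n) F) (u : (Fin k → F) → (Fin n → F))
  (f : (Fin n → F) → ℂ) (ns : (Fin k → F) → ℝ)

/-- `W_s` is supported on the fiber `{y | G y = s}`, so of the sum over `s` in
`Y_c = q^{-k/2} ∑_s χ_c(u_s) W_s / n_s` only the term `s = G y` survives at `y`. -/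
noncomputable def pgmVector (c y : Fin n → F) : ℂ :=
  (√((Fintype.card F : ℝ) ^ k) : ℂ)⁻¹ * (chi F n c (u (G *ᵥ y)) / ns (G *ᵥ y)) * FT F n f y

variable {G ns}

theorem sum_conj_pgmVector_mul
    (hns : ∀ s, ns s = √(∑ y, if G *ᵥ y = s then ‖FT F n f y‖ ^ 2 else 0))
    (c : Fin n → F) (b : (Fin k → F) → ℂ) :
    ∑ y, conj (pgmVector G u f ns c y) * (b (G *ᵥ y) * FT F n f y) =
      (√((Fintype.card F : ℝ) ^ k) : ℂ)⁻¹ *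
        ∑ s, conj (chi F n c (u s) / ns s) * b s * (ns s : ℂ) ^ 2 := by
  rw [← sum_conj_mul_eq_sum_mul_fiberNorm_sq (G *ᵥ ·) (FT F n f) ns hns
    (fun s => chi F n c (u s) / ns s) b, mul_sum]
  refine sum_congr rfl fun y _ => ?_
  simp only [pgmVector, map_mul, map_inv₀, Complex.conj_ofReal]
  ring

theorem sum_conj_pgmVector_mul_pgmVector (hu : ∀ s, G *ᵥ u s = s)
    (hns : ∀ s, ns s = √(∑ y, if G *ᵥ y = s then ‖FT F n f y‖ ^ 2 else 0))
    (hns0 : ∀ s, ns s ≠ 0) (m m' : Fin k → F) :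
    ∑ y, conj (pgmVector G u f ns (vecMul m G) y) * pgmVector G u f ns (vecMul m' G) y =
      if vecMul m G = vecMul m' G then 1 else 0 := by
  set A : ℂ := (√((Fintype.card F : ℝ) ^ k) : ℂ)⁻¹
  have hterm : ∀ s, conj (chi F n (vecMul m G) (u s) / ns s) *
      (A * (chi F n (vecMul m' G) (u s) / ns s)) * (ns s : ℂ) ^ 2 =
      A * (conj (chi F n (vecMul m G) (u s)) * chi F n (vecMul m' G) (u s)) := fun s => by
    have : (ns s : ℂ) ≠ 0 := Complex.ofReal_ne_zero.mpr (hns0 s)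
    rw [map_div₀, Complex.conj_ofReal]
    field_simp
  refine (sum_conj_pgmVector_mul u f hns _
    fun s => A * (chi F n (vecMul m' G) (u s) / ns s)).trans ?_
  rw [sum_congr rfl fun s _ => hterm s, ← mul_sum, sum_conj_chi_mul_chi_codeword G u hu,
    ← mul_assoc, inv_ofReal_sqrt_mul_self (by positivity)]
  split_ifs
  · push_cast
    exact inv_mul_cancel₀ (by simp)
  · rw [mul_zero]

theorem sum_conj_pgmVector_mul_FT_translate (hu : ∀ s, G *ᵥ u s = s)
    (hns : ∀ s, ns s = √(∑ y, if G *ᵥ y = s then ‖FT F n f y‖ ^ 2 else 0)) (m : Fin k → F) :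
    ∑ y, conj (pgmVector G u f ns (vecMul m G) y) * FT F n (fun e => f (e - vecMul m G)) y =
      (√((Fintype.card F : ℝ) ^ k) : ℂ)⁻¹ * ∑ s, (ns s : ℂ) := by
  have hshift : ∀ y, FT F n (fun e => f (e - vecMul m G)) y =
      chi F n (vecMul m G) (u (G *ᵥ y)) * FT F n f y := fun y => by
    rw [FT_comp_sub_apply, chi_vecMul, chi_vecMul, hu]
  simp only [hshift]
  refine (sum_conj_pgmVector_mul u f hns _ fun s => chi F n (vecMul m G) (u s)).trans
    (congrArg _ (sum_congr rfl fun s _ => ?_))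
  rcases eq_or_ne (ns s : ℂ) 0 with h | h
  · simp [h]
  · rw [map_div₀, Complex.conj_ofReal]
    field_simp
    exact conj_chi_mul_self _ _

end PrettyGoodMeasurement

theorem PGM_orthonormal_and_overlap_general (F : Type) [Field F] [Fintype F] [DecidableEq F]
    [Algebra (ZMod (ringChar F)) F] (n k : ℕ)
    (G : Matrix (Fin k) (Fin n) F)
    (f : (Fin n → F) → ℂ)
    (u : (Fin k → F) → (Fin n → F)) (hu : ∀ s, G.mulVec (u s) = s)
    (ns : (Fin k → F) → ℝ)
    (hns : ∀ s, ns s =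
      Real.sqrt (∑ y : Fin n → F, if G.mulVec y = s then ‖FT F n f y‖ ^ 2 else 0))
    (hpos : ∀ s, 0 < ns s)
    (Y : (Fin n → F) → (Fin n → F) → ℂ)
    (hY : ∀ c y, Y c y = (Real.sqrt ((Fintype.card F : ℝ) ^ k) : ℂ)⁻¹ *
      ∑ s : Fin k → F, chi F n c (u s) *
        (if G.mulVec y = s then FT F n f y / (ns s : ℂ) else 0)) :
    (∀ c c' : Fin n → F,
      (∃ m : Fin k → F, c = Matrix.vecMul m G) →
      (∃ m : Fin k → F, c' = Matrix.vecMul m G) →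
      ∑ y : Fin n → F, (starRingEnd ℂ) (Y c y) * Y c' y =
        if c = c' then 1 else 0) ∧
    (∀ c : Fin n → F, (∃ m : Fin k → F, c = Matrix.vecMul m G) →
      (∑ y : Fin n → F, (starRingEnd ℂ) (Y c y) * FT F n (fun e => f (e - c)) y =
        (Real.sqrt ((Fintype.card F : ℝ) ^ k) : ℂ)⁻¹ * ∑ s : Fin k → F, (ns s : ℂ)) ∧
      ‖∑ y : Fin n → F, (starRingEnd ℂ) (Y c y) * FT F n (fun e => f (e - c)) y‖ ^ 2 =
        (1 / (Fintype.card F : ℝ) ^ k) * (∑ s : Fin k → F, ns s) ^ 2) := by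
  have hY_eq : Y = pgmVector G u f ns := funext₂ fun c y => by
    rw [hY, pgmVector]
    simp only [mul_ite, mul_zero, sum_ite_eq, mem_univ, if_true]
    ring
  subst hY_eq
  refine ⟨?_, ?_⟩
  · rintro _ _ ⟨m, rfl⟩ ⟨m', rfl⟩
    exact sum_conj_pgmVector_mul_pgmVector u f hu hns (fun s => (hpos s).ne') m m'
  · rintro _ ⟨m, rfl⟩
    have hoverlap := sum_conj_pgmVector_mul_FT_translate u f hu hns m
    refine ⟨hoverlap, ?_⟩
    rw [hoverlap, ← Complex.ofReal_sum, norm_inv_ofReal_sqrt_mul_sq (by positivity)]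

/-- The vectors `Y_c = q^{-k/2} ∑_s χ_c(u_s) W̃_s` of the pretty good measurement are
pairwise orthonormal, and the overlap with `ψ̂_c` equals `q^{-k/2} ∑_s n_s`, hence its
squared modulus is `(1/q^k)(∑_s n_s)²`. -/
theorem PGM_orthonormal_and_overlap (F : Type) [Field F] [Fintype F] [DecidableEq F]
    [Algebra (ZMod (ringChar F)) F] (n k : ℕ)
    (G : Matrix (Fin k) (Fin n) F) (hG : G.rank = k)
    (f : (Fin n → F) → ℂ) (hf : ∑ x : Fin n → F, ‖f x‖ ^ 2 = 1)
    (u : (Fin k → F) → (Fin n → F)) (hu : ∀ s, G.mulVec (u s) = s)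
    (ns : (Fin k → F) → ℝ)
    (hns : ∀ s, ns s =
      Real.sqrt (∑ y : Fin n → F, if G.mulVec y = s then ‖FT F n f y‖ ^ 2 else 0))
    (hpos : ∀ s, 0 < ns s)
    (Y : (Fin n → F) → (Fin n → F) → ℂ)
    (hY : ∀ c y, Y c y = (Real.sqrt ((Fintype.card F : ℝ) ^ k) : ℂ)⁻¹ *
      ∑ s : Fin k → F, chi F n c (u s) *
        (if G.mulVec y = s then FT F n f y / (ns s : ℂ) else 0)) :
    (∀ c c' : Fin n → F,
      (∃ m : Fin k → F, c = Matrix.vecMul m G) →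
      (∃ m : Fin k → F, c' = Matrix.vecMul m G) →
      ∑ y : Fin n → F, (starRingEnd ℂ) (Y c y) * Y c' y =
        if c = c' then 1 else 0) ∧
    (∀ c : Fin n → F, (∃ m : Fin k → F, c = Matrix.vecMul m G) →
      (∑ y : Fin n → F, (starRingEnd ℂ) (Y c y) * FT F n (fun e => f (e - c)) y =
        (Real.sqrt ((Fintype.card F : ℝ) ^ k) : ℂ)⁻¹ * ∑ s : Fin k → F, (ns s : ℂ)) ∧
      ‖∑ y : Fin n → F, (starRingEnd ℂ) (Y c y) * FT F n (fun e => f (e - c)) y‖ ^ 2 =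
        (1 / (Fintype.card F : ℝ) ^ k) * (∑ s : Fin k → F, ns s) ^ 2) :=
  PGM_orthonormal_and_overlap_general F n k G f u hu ns hns hpos Y hY
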